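/- arXiv:1909.08688 — 4 statements merged into one kernel-verified Lean document; each statement's English description precedes it below -/
import Mathlib

section
/- Let X_1, X_2, ... be i.i.d. positive integer-valued random variables, W_n = X_1 + ... + X_n, and W = {W_n : n ≥ 1}. Then with probability 1 the difference set W − W = {W_i − W_j : i, j ≥ 1} equals M(Spt(X)) ∪ (−M(Spt(X))), where Spt(X) = {i ∈ ℤ_+ : P(X_1 = i) > 0} and M(S) is the additive monoid of all finite nonnegative-integer linear combinations of elements of S. -/
open MeasureTheory ProbabilityTheory Filter

/-!
Every gap lies a.s. in the support, so every difference `W i - W j` (`j ≤ i`) is a sum of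
support elements. Conversely, an element of the monoid is a finite sum `s₁ + ⋯ + sₘ` of support
elements, and by the second Borel–Cantelli lemma applied to disjoint blocks of gaps, the word
`s₁ ⋯ sₘ` a.s. occurs among the gaps; the weights at the two ends of such an occurrence differ
by exactly that sum.
-/

namespace ProbabilityTheory

variable {Ω : Type*} [MeasurableSpace Ω] {μ : Measure Ω}

lemma ae_measure_preimage_singleton_ne_zero {α : Type*} [Countable α] (Y : Ω → α) :
    ∀ᵐ ω ∂μ, μ (Y ⁻¹' {Y ω}) ≠ 0 := by
  have hnull : μ (⋃ v ∈ {v | μ (Y ⁻¹' {v}) = 0}, Y ⁻¹' {v}) = 0 :=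
    (measure_biUnion_null_iff (Set.to_countable _)).2 fun _ hv => hv
  refine ae_iff.2 <| measure_mono_null (fun ω hω => ?_) hnull
  exact Set.mem_biUnion (x := Y ω) (not_not.1 hω) rfl

lemma iIndepFun.iIndepSet_iInter_preimage_row {κ J β : Type*} [Fintype J] [MeasurableSpace β]
    {Y : κ × J → Ω → β} (hY : ∀ i, Measurable (Y i)) (h : iIndepFun Y μ)
    {s : J → Set β} (hs : ∀ j, MeasurableSet (s j)) :
    iIndepSet (fun b => ⋂ j, Y (b, j) ⁻¹' s j) μ := by
  classical
  have hrow (b : κ) : μ (⋂ j, Y (b, j) ⁻¹' s j) = ∏ j, μ (Y (b, j) ⁻¹' s j) :=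
    (h.precomp (Prod.mk_right_injective b)).meas_iInter fun j => ⟨s j, hs j, rfl⟩
  rw [iIndepSet_iff_meas_biInter fun b => .iInter fun j => hY _ (hs j)]
  intro S
  calc μ (⋂ b ∈ S, ⋂ j, Y (b, j) ⁻¹' s j)
      = μ (⋂ i ∈ S ×ˢ Finset.univ, Y i ⁻¹' s i.2) := by
        congr 1; ext ω; simp only [Set.mem_iInter, Finset.mem_product, Finset.mem_univ, and_true]
        exact ⟨fun h ⟨b, j⟩ hb => h b hb j, fun h b hb j => h (b, j) hb⟩
    _ = ∏ i ∈ S ×ˢ Finset.univ, μ (Y i ⁻¹' s i.2) :=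
        h.measure_inter_preimage_eq_mul _ fun i _ => hs i.2
    _ = ∏ b ∈ S, μ (⋂ j, Y (b, j) ⁻¹' s j) := by
        rw [Finset.prod_product]; simp only [hrow]

variable {α : Type*} [MeasurableSpace α] [MeasurableSingletonClass α] {X : ℕ → Ω → α}

theorem iIndepFun.ae_frequently_forall_fin_eq (hX : ∀ i, Measurable (X i))
    (h : iIndepFun X μ) (hident : ∀ i, IdentDistrib (X i) (X 0) μ μ) {m : ℕ} (p : Fin m → α)
    (hp : ∀ k, μ (X 0 ⁻¹' {p k}) ≠ 0) :
    ∀ᵐ ω ∂μ, ∃ᶠ n in atTop, ∀ k : Fin m, X (n + k) ω = p k := by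
  have := h.isProbabilityMeasure
  -- blocks of length `m + 1` rather than `m`, so that the `b`-th block starts after `b`
  let g : ℕ × Fin m → ℕ := fun bk => (Nat.divModEquiv (m + 1)).symm (bk.1, bk.2.castSucc)
  have hg : g.Injective := (Nat.divModEquiv (m + 1)).symm.injective.comp
    (Function.injective_id.prodMap (Fin.castSucc_injective m))
  let E : ℕ → Set Ω := fun b => ⋂ k, X (g (b, k)) ⁻¹' {p k}
  have hE_meas (b : ℕ) : MeasurableSet (E b) := .iInter fun k => hX _ (measurableSet_singleton _)
  have hE_indep : iIndepSet E μ :=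
    iIndepFun.iIndepSet_iInter_preimage_row (fun _ => hX _) (h.precomp hg)
      fun _ => measurableSet_singleton _
  have hE_measure (b : ℕ) : μ (E b) = ∏ k, μ (X 0 ⁻¹' {p k}) :=
    ((h.precomp (hg.comp (Prod.mk_right_injective b))).meas_iInter
      fun k => ⟨_, measurableSet_singleton (p k), rfl⟩).trans
    (Finset.prod_congr rfl fun k _ => (hident _).measure_mem_eq (measurableSet_singleton _))
  have hsum : ∑' b, μ (E b) = ⊤ := by
    simp_rw [hE_measure]
    exact ENNReal.tsum_const_eq_top_of_ne_zero (Finset.prod_ne_zero_iff.2 fun k _ => hp k)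
  have hlimsup : ∀ᵐ ω ∂μ, ω ∈ limsup E atTop :=
    (mem_ae_iff_prob_eq_one (.measurableSet_limsup hE_meas)).2
      (measure_limsup_eq_one hE_meas hE_indep hsum)
  filter_upwards [hlimsup] with ω hω
  rw [mem_limsup_iff_frequently_mem, frequently_atTop] at hω
  refine frequently_atTop.2 fun N => ?_
  obtain ⟨b, hb, hbE⟩ := hω N
  refine ⟨b * (m + 1), hb.trans (Nat.le_mul_of_pos_right _ m.succ_pos), fun k => ?_⟩
  simpa [E, g] using Set.mem_iInter.1 hbE k

theorem ae_forall_mem_closure_exists_sum_Ico_eq {M : Type*} [AddCommMonoid M] [Countable M]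
    [MeasurableSpace M] [MeasurableSingletonClass M] {X : ℕ → Ω → M}
    (hX : ∀ i, Measurable (X i)) (h : iIndepFun X μ)
    (hident : ∀ i, IdentDistrib (X i) (X 0) μ μ) :
    ∀ᵐ ω ∂μ, ∀ x ∈ AddSubmonoid.closure {v | μ (X 0 ⁻¹' {v}) ≠ 0},
      ∃ j i, j ≤ i ∧ ∑ k ∈ Finset.Ico (j + 1) (i + 1), X k ω = x := by
  refine ae_all_iff.2 fun x => ?_
  by_cases hx : x ∈ AddSubmonoid.closure {v | μ (X 0 ⁻¹' {v}) ≠ 0}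
  swap
  · exact .of_forall fun _ hx' => absurd hx' hx
  obtain ⟨l, hl, rfl⟩ := AddSubmonoid.exists_list_of_mem_closure hx
  have hp (k : Fin l.length) : μ (X 0 ⁻¹' {l[k]}) ≠ 0 := hl _ (l.getElem_mem k.2)
  filter_upwards [h.ae_frequently_forall_fin_eq hX hident _ hp] with ω hω _
  obtain ⟨n, hword, hn⟩ := (Frequently.and_eventually hω (eventually_gt_atTop 0)).exists
  obtain ⟨j, rfl⟩ := Nat.exists_eq_add_one_of_ne_zero hn.ne'
  refine ⟨j, j + l.length, by omega, ?_⟩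
  rw [Finset.sum_Ico_eq_sum_range, show j + l.length + 1 - (j + 1) = l.length by omega,
    ← Fin.sum_univ_getElem, ← Fin.sum_univ_eq_sum_range]
  exact Fintype.sum_congr _ _ hword

end ProbabilityTheory

theorem random_gap_difference_set_general
    {Ω : Type*} [MeasurableSpace Ω] (μ : Measure Ω)
    (X : ℕ → Ω → ℕ) (hmeas : ∀ i, Measurable (X i))
    (hindep : iIndepFun X μ)
    (hident : ∀ i, IdentDistrib (X i) (X 0) μ μ)
    (W : ℕ → Ω → ℕ) (hW : ∀ n ω, W n ω = ∑ i ∈ Finset.range (n + 1), X i ω)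
    (Spt : Set ℕ) (hSpt : Spt = {v : ℕ | μ {ω | X 0 ω = v} ≠ 0}) :
    ∀ᵐ ω ∂μ, ∀ z : ℤ,
      (∃ i j : ℕ, (W i ω : ℤ) - (W j ω : ℤ) = z) ↔
      (∃ x : ℕ, x ∈ AddSubmonoid.closure Spt ∧ (z = (x : ℤ) ∨ z = -(x : ℤ))) := by
  replace hSpt : Spt = {v | μ (X 0 ⁻¹' {v}) ≠ 0} := hSpt
  have hdiff (ω : Ω) {i j : ℕ} (hji : j ≤ i) :
      (W i ω : ℤ) - W j ω = ((∑ k ∈ Finset.Ico (j + 1) (i + 1), X k ω : ℕ) : ℤ) := by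
    rw [hW, hW]; push_cast; exact (Finset.sum_Ico_eq_sub _ (by omega)).symm
  have hgaps : ∀ᵐ ω ∂μ, ∀ i, X i ω ∈ Spt := by
    refine ae_all_iff.2 fun i => (ae_measure_preimage_singleton_ne_zero (X i)).mono fun ω hω => ?_
    rw [hSpt]
    exact ((hident i).measure_mem_eq (measurableSet_singleton _)).symm.trans_ne hω
  have hblocks := ae_forall_mem_closure_exists_sum_Ico_eq hmeas hindep hident
  rw [← hSpt] at hblocks
  filter_upwards [hgaps, hblocks] with ω hgap hblock z
  have hmem (a b : ℕ) : ∑ k ∈ Finset.Ico a b, X k ω ∈ AddSubmonoid.closure Spt :=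
    AddSubmonoid.sum_mem _ fun k _ => AddSubmonoid.subset_closure (hgap k)
  constructor
  · rintro ⟨i, j, rfl⟩
    rcases le_total j i with hji | hij
    · exact ⟨_, hmem _ _, .inl (hdiff ω hji)⟩
    · exact ⟨_, hmem _ _, .inr (by rw [← hdiff ω hij]; ring)⟩
  · rintro ⟨x, hx, rfl | rfl⟩ <;> obtain ⟨j, i, hji, hsum⟩ := hblock x hx
    · exact ⟨i, j, by rw [hdiff ω hji, hsum]⟩
    · exact ⟨j, i, by rw [← neg_sub, hdiff ω hji, hsum]⟩

/-- Almost surely, the difference set `W - W` of the weight sequence equals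
`M(Spt(X)) ∪ -M(Spt(X))`, where `Spt(X)` is the support of the gap distribution and
`M(S)` is the additive monoid generated by `S`. -/
theorem random_gap_difference_set
    {Ω : Type*} [MeasurableSpace Ω] (μ : Measure Ω) [IsProbabilityMeasure μ]
    (X : ℕ → Ω → ℕ) (hmeas : ∀ i, Measurable (X i))
    (hpos : ∀ i ω, 0 < X i ω)
    (hindep : iIndepFun X μ)
    (hident : ∀ i, IdentDistrib (X i) (X 0) μ μ)
    (W : ℕ → Ω → ℕ) (hW : ∀ n ω, W n ω = ∑ i ∈ Finset.range (n + 1), X i ω)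
    (Spt : Set ℕ) (hSpt : Spt = {v : ℕ | μ {ω | X 0 ω = v} ≠ 0}) :
    ∀ᵐ ω ∂μ, ∀ z : ℤ,
      (∃ i j : ℕ, (W i ω : ℤ) - (W j ω : ℤ) = z) ↔
      (∃ x : ℕ, x ∈ AddSubmonoid.closure Spt ∧ (z = (x : ℤ) ∨ z = -(x : ℤ))) :=
  random_gap_difference_set_general μ X hmeas hindep hident W hW Spt hSpt
end

section
/- Fix a natural number m and let p = 2^{−1/(m+1)}. Let X_1, X_2, ... be i.i.d. random variables with P(X_1 = 2^k) = p^k(1 − p) for all integers k ≥ 0, and let W_n = X_1 + ... + X_n. Then with probability 1 there are infinitely many positive integers that cannot be written as a sum W_{i_1} + ... + W_{i_m} of m distinct weights (indices i_1 < ... < i_m). -/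
open MeasureTheory ProbabilityTheory Filter Finset
open scoped ENNReal

/-!
Since `p ^ (m + 1) = 1/2`, the gap `X n` takes the value `2 ^ k` with `2 ^ k ≈ n ^ (m + 1)`
with probability about `1/n`. These events are independent and their probabilities are not
summable, so by the second Borel–Cantelli lemma, almost surely `W n ≥ X n ≳ n ^ (m + 1)` for
infinitely many `n`. For such `n`, every integer below `W n` that is a sum
of `m` distinct weights uses only the weights `W 0, …, W (n - 1)`; there are at most
`n.choose m ≤ n ^ m` such sums, far fewer than `W n`, so arbitrarily large integers are not
of this form.
-/

lemma infinite_setOf_not_sum_card_eq {m : ℕ} {w : ℕ → ℕ} (hw : Monotone w)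
    (h : ∀ C, ∃ n, n.choose m + C < w n) :
    {N : ℕ | 0 < N ∧ ¬∃ F : Finset ℕ, F.card = m ∧ ∑ i ∈ F, w i = N}.Infinite := by
  intro hfin
  obtain ⟨M, hM⟩ := hfin.bddAbove
  obtain ⟨n, hn⟩ := h (M + 1)
  have hcover : Ioo M (w n) ⊆ (powersetCard m (range n)).image (fun F => ∑ i ∈ F, w i) := by
    intro N hN
    rw [mem_Ioo] at hN
    obtain ⟨F, hFcard, hFsum⟩ : ∃ F : Finset ℕ, F.card = m ∧ ∑ i ∈ F, w i = N := by
      by_contra hN'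
      exact absurd (hM ⟨by omega, hN'⟩) (by omega)
    refine mem_image.2 ⟨F, mem_powersetCard.2 ⟨fun i hi => mem_range.2 ?_, hFcard⟩, hFsum⟩
    by_contra! hni
    have hwi : w i ≤ N := hFsum ▸ single_le_sum (fun j _ => Nat.zero_le (w j)) hi
    have := hw hni
    omega
  have hcard := (card_le_card hcover).trans card_image_le
  rw [Nat.card_Ioo, card_powersetCard, card_range] at hcard
  omega

lemma two_rpow_neg_inv_succ_pow_succ (m : ℕ) :
    ((2 : ℝ) ^ (-(1 : ℝ) / ((m : ℝ) + 1))) ^ (m + 1) = 2⁻¹ := by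
  rw [← Real.rpow_natCast, ← Real.rpow_mul zero_le_two]
  push_cast
  rw [div_mul_cancel₀ _ (by positivity), Real.rpow_neg_one]

lemma inv_natCast_le_pow_log {q : ℝ} {d : ℕ} (hq : 0 ≤ q) (hqd : q ^ d = 2⁻¹) (n : ℕ) :
    (n : ℝ)⁻¹ ≤ q ^ Nat.log 2 (n ^ d) := by
  have hd : d ≠ 0 := by rintro rfl; norm_num at hqd
  rcases Nat.eq_zero_or_pos n with rfl | hn
  · simpa using pow_nonneg hq _
  rw [← pow_le_pow_iff_left₀ (by positivity) (by positivity) hd, ← pow_mul, mul_comm, pow_mul,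
    hqd, inv_pow, inv_pow]
  gcongr
  exact_mod_cast Nat.pow_log_le_self 2 (by positivity)

lemma tsum_ofReal_pow_log_mul_eq_top {q : ℝ} {d : ℕ} (hq : 0 ≤ q) (hqd : q ^ d = 2⁻¹) :
    ∑' n : ℕ, ENNReal.ofReal (q ^ Nat.log 2 (n ^ d) * (1 - q)) = ∞ := by
  have hd : d ≠ 0 := by rintro rfl; norm_num at hqd
  have hq1 : 0 < 1 - q := by
    have : q ^ d < 1 := by rw [hqd]; norm_num
    linarith [(pow_lt_one_iff_of_nonneg hq hd).1 this]
  by_contra hfin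
  have hsum := ENNReal.summable_toReal hfin
  simp_rw [ENNReal.toReal_ofReal (mul_nonneg (pow_nonneg hq _) hq1.le)] at hsum
  refine Real.not_summable_natCast_inv ((hsum.mul_left (1 - q)⁻¹).of_nonneg_of_le
    (fun n => by positivity) fun n => ?_)
  rw [mul_comm _ (1 - q), inv_mul_cancel_left₀ hq1.ne']
  exact inv_natCast_le_pow_log hq hqd n

lemma pow_add_lt_two_pow_log {m n C : ℕ} (hn : 2 * (C + 1) ≤ n) :
    n ^ m + C < 2 ^ Nat.log 2 (n ^ (m + 1)) := by
  have hlog : n ^ m * n < 2 * 2 ^ Nat.log 2 (n ^ (m + 1)) := by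
    rw [← pow_succ, ← pow_succ']
    exact Nat.lt_pow_succ_log_self one_lt_two _
  have hpos : 1 ≤ n ^ m := Nat.one_le_pow _ _ (by omega)
  have hmul : 2 * (C + 1) * n ^ m ≤ n ^ m * n := by
    rw [mul_comm _ n]
    exact Nat.mul_le_mul_right _ hn
  nlinarith

lemma ProbabilityTheory.iIndepFun.ae_frequently_mem {Ω α : Type*} [MeasurableSpace Ω]
    [MeasurableSpace α] {μ : Measure Ω} [IsProbabilityMeasure μ] {X : ℕ → Ω → α}
    (hX : ∀ n, Measurable (X n)) (hindep : iIndepFun X μ) {t : ℕ → Set α}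
    (ht : ∀ n, MeasurableSet (t n)) (hsum : ∑' n, μ (X n ⁻¹' t n) = ∞) :
    ∀ᵐ ω ∂μ, ∃ᶠ n in atTop, X n ω ∈ t n := by
  have hmeas : ∀ n, MeasurableSet (X n ⁻¹' t n) := fun n => hX n (ht n)
  have hindepSet : iIndepSet (fun n => X n ⁻¹' t n) μ :=
    (iIndepSet_iff_meas_biInter hmeas).2 fun s =>
      hindep.meas_biInter fun i _ => ⟨t i, ht i, rfl⟩
  have hlimsup := measure_limsup_eq_one hmeas hindepSet hsum
  rw [← prob_compl_eq_zero_iff (MeasurableSet.measurableSet_limsup hmeas)] at hlimsup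
  filter_upwards [measure_eq_zero_iff_ae_notMem.1 hlimsup] with ω hω
  exact mem_limsup_iff_frequently_mem.1 (not_not.1 hω)

/-- Counterexample: if the gaps are i.i.d. with `P(X = 2^k) = p^k (1-p)` for
`p = 2^{-1/(m+1)}`, then almost surely infinitely many positive integers cannot be written
as a sum of `m` index-distinct weights. -/
theorem heavy_tail_gaps_not_m_complete
    {Ω : Type*} [MeasurableSpace Ω] (μ : Measure Ω) [IsProbabilityMeasure μ]
    (m : ℕ) (p : ℝ) (hp : p = (2 : ℝ) ^ (-(1 : ℝ) / ((m : ℝ) + 1)))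
    (X : ℕ → Ω → ℕ) (hmeas : ∀ i, Measurable (X i))
    (hindep : iIndepFun X μ)
    (hident : ∀ i, IdentDistrib (X i) (X 0) μ μ)
    (hdist : ∀ k : ℕ, μ {ω | X 0 ω = 2 ^ k} = ENNReal.ofReal (p ^ k * (1 - p)))
    (W : ℕ → Ω → ℕ) (hW : ∀ n ω, W n ω = ∑ i ∈ Finset.range (n + 1), X i ω) :
    ∀ᵐ ω ∂μ,
      {N : ℕ | 0 < N ∧ ¬∃ F : Finset ℕ, F.card = m ∧ ∑ i ∈ F, W i ω = N}.Infinite := by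
  set k : ℕ → ℕ := fun n => Nat.log 2 (n ^ (m + 1))
  have hp0 : 0 ≤ p := hp ▸ (Real.rpow_pos_of_pos two_pos _).le
  have hpm : p ^ (m + 1) = 2⁻¹ := hp ▸ two_rpow_neg_inv_succ_pow_succ m
  have hhit : ∀ᵐ ω ∂μ, ∃ᶠ n in atTop, X n ω = 2 ^ k n := by
    refine hindep.ae_frequently_mem hmeas (fun n => measurableSet_singleton (2 ^ k n)) ?_
    calc ∑' n, μ (X n ⁻¹' {2 ^ k n}) = ∑' n, ENNReal.ofReal (p ^ k n * (1 - p)) :=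
          tsum_congr fun n =>
            ((hident n).measure_mem_eq (measurableSet_singleton _)).trans (hdist (k n))
      _ = ∞ := tsum_ofReal_pow_log_mul_eq_top hp0 hpm
  filter_upwards [hhit] with ω hω
  have hmono : Monotone fun n => W n ω := fun a b hab => by
    simp only [hW]
    exact sum_le_sum_of_subset (range_subset_range.2 (by omega))
  refine infinite_setOf_not_sum_card_eq hmono fun C => ?_
  obtain ⟨n, hXn, hn⟩ := (hω.and_eventually (eventually_ge_atTop (2 * (C + 1)))).exists
  refine ⟨n, ?_⟩
  calc n.choose m + C ≤ n ^ m + C := by gcongr; exact Nat.choose_le_pow n m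
    _ < 2 ^ k n := pow_add_lt_two_pow_log hn
    _ = X n ω := hXn.symm
    _ ≤ W n ω := hW n ω ▸
        single_le_sum (f := fun i => X i ω) (fun i _ => Nat.zero_le _) (self_mem_range_succ n)
end

section
/- Fix a natural number m, let p = 2^{−1/(m+1)}, and let X_1, X_2, ... be i.i.d. random variables with P(X_1 = 2^k) = p^k(1 − p) for all integers k ≥ 0. Then with probability 1 the event X_n > n^{m+1} occurs for infinitely many n. -/
open MeasureTheory ProbabilityTheory Filter

/-!
The tail of the geometric law is `P(X ≥ 2^k) = p^k`, and `p^(m+1) = 1/2`. Taking `2^k` to be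
the least power of `2^(m+1)` exceeding `(n+1)^(m+1)` gives `P(X_n > (n+1)^(m+1)) ≥ 1/(2(n+1))`,
whose sum diverges; the second Borel–Cantelli lemma concludes.
-/

lemma hasSum_geometric_tail {p : ℝ} (hp0 : 0 ≤ p) (hp1 : p < 1) (k : ℕ) :
    HasSum (fun j : ℕ ↦ p ^ (k + j) * (1 - p)) (p ^ k) := by
  have h := (hasSum_geometric_of_lt_one hp0 hp1).mul_left (p ^ k * (1 - p))
  rw [mul_assoc, mul_inv_cancel₀ (sub_ne_zero.2 hp1.ne'), mul_one] at h
  simpa only [pow_add, mul_right_comm, mul_assoc] using h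

lemma tsum_ofReal_div_natCast_succ_eq_top {c : ℝ} (hc : 0 < c) :
    ∑' n : ℕ, ENNReal.ofReal (c / (n + 1)) = ⊤ := by
  by_contra h
  have hsum : Summable fun n : ℕ ↦ c * (1 / ((n + 1 : ℕ) : ℝ)) := by
    refine (ENNReal.summable_toReal h).congr fun n ↦ ?_
    rw [ENNReal.toReal_ofReal (by positivity)]
    push_cast; ring
  exact Real.not_summable_one_div_natCast
    ((summable_nat_add_iff 1).1 ((summable_mul_left_iff hc.ne').1 hsum))

lemma rpow_neg_one_div_pow_eq_half (m : ℕ) :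
    ((2 : ℝ) ^ (-(1 : ℝ) / ((m : ℝ) + 1))) ^ (m + 1) = 1 / 2 := by
  rw [← Real.rpow_natCast, ← Real.rpow_mul zero_le_two]
  push_cast
  rw [div_mul_cancel₀ _ (by positivity), Real.rpow_neg_one, one_div]

section
variable {Ω : Type*} [MeasurableSpace Ω] {μ : Measure Ω}

theorem ae_infinite_setOf_mem_of_iIndepSet {s : ℕ → Set Ω} (hsm : ∀ n, MeasurableSet (s n))
    (hs : iIndepSet s μ) (hs' : ∑' n, μ (s n) = ⊤) : ∀ᵐ ω ∂μ, {n | ω ∈ s n}.Infinite := by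
  have := hs.isProbabilityMeasure
  have hlimsup : limsup s atTop ∈ ae μ :=
    (mem_ae_iff_prob_eq_one (MeasurableSet.measurableSet_limsup hsm)).2
      (measure_limsup_eq_one hsm hs hs')
  filter_upwards [hlimsup] with ω hω
  exact Nat.frequently_atTop_iff_infinite.1 (mem_limsup_iff_frequently_mem.1 hω)

lemma ProbabilityTheory.iIndepFun.iIndepSet_preimage {ι β : Type*} [MeasurableSpace β]
    {X : ι → Ω → β} (hX : ∀ i, Measurable (X i)) (h : iIndepFun X μ) {t : ι → Set β}
    (ht : ∀ i, MeasurableSet (t i)) : iIndepSet (fun i ↦ X i ⁻¹' t i) μ := by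
  rw [iIndepSet_iff_meas_biInter fun i ↦ hX i (ht i)]
  exact fun S ↦ h.meas_biInter fun i _ ↦ ⟨t i, ht i, rfl⟩

lemma ofReal_pow_le_measure_two_pow_le {Y : Ω → ℕ} (hY : Measurable Y) {p : ℝ} (hp0 : 0 ≤ p)
    (hp1 : p < 1) (hdist : ∀ k : ℕ, μ {ω | Y ω = 2 ^ k} = ENNReal.ofReal (p ^ k * (1 - p)))
    (k : ℕ) : ENNReal.ofReal (p ^ k) ≤ μ {ω | 2 ^ k ≤ Y ω} := by
  have hdisj : Pairwise (Function.onFun Disjoint fun j : ℕ ↦ Y ⁻¹' {2 ^ (k + j)}) :=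
    fun i j hij ↦ (Set.disjoint_singleton.2 fun h ↦
      hij (by simpa using Nat.pow_right_injective le_rfl h)).preimage Y
  have hsub : (⋃ j : ℕ, Y ⁻¹' {2 ^ (k + j)}) ⊆ {ω | 2 ^ k ≤ Y ω} := by
    refine Set.iUnion_subset fun j ω hω ↦ ?_
    rw [Set.mem_preimage, Set.mem_singleton_iff] at hω
    exact (hω ▸ Nat.pow_le_pow_right two_pos (Nat.le_add_right k j) : 2 ^ k ≤ Y ω)
  have hgeom := hasSum_geometric_tail hp0 hp1 k
  calc ENNReal.ofReal (p ^ k)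
      = ∑' j : ℕ, ENNReal.ofReal (p ^ (k + j) * (1 - p)) := by
        rw [← ENNReal.ofReal_tsum_of_nonneg
          (fun j ↦ mul_nonneg (pow_nonneg hp0 _) (sub_nonneg.2 hp1.le)) hgeom.summable,
          hgeom.tsum_eq]
    _ = μ (⋃ j : ℕ, Y ⁻¹' {2 ^ (k + j)}) := by
        rw [measure_iUnion hdisj fun j ↦ hY (measurableSet_singleton _)]
        exact tsum_congr fun j ↦ (hdist (k + j)).symm
    _ ≤ μ {ω | 2 ^ k ≤ Y ω} := measure_mono hsub

lemma ofReal_half_div_succ_le_measure {Y : Ω → ℕ} (hY : Measurable Y) {m : ℕ} {p : ℝ}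
    (hp0 : 0 ≤ p) (hpm : p ^ (m + 1) = 1 / 2)
    (hdist : ∀ k : ℕ, μ {ω | Y ω = 2 ^ k} = ENNReal.ofReal (p ^ k * (1 - p))) (n : ℕ) :
    ENNReal.ofReal (2⁻¹ / (n + 1)) ≤ μ {ω | (n + 1) ^ (m + 1) < Y ω} := by
  have hp1 : p < 1 := (pow_lt_one_iff_of_nonneg hp0 m.succ_ne_zero).1 (by rw [hpm]; norm_num)
  set L := Nat.log 2 (n + 1) + 1
  have hlt : n + 1 < 2 ^ L := Nat.lt_pow_succ_log_self one_lt_two _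
  have hle : 2 ^ L ≤ 2 * (n + 1) := by
    rw [pow_succ, mul_comm]
    exact Nat.mul_le_mul_left 2 (Nat.pow_log_le_self 2 n.succ_ne_zero)
  have hpL : 2⁻¹ / ((n : ℝ) + 1) ≤ p ^ ((m + 1) * L) := by
    rw [pow_mul, hpm, one_div, inv_pow, div_eq_mul_inv, ← mul_inv]
    gcongr
    exact_mod_cast hle
  have hpow : (n + 1) ^ (m + 1) < 2 ^ ((m + 1) * L) := by
    rw [mul_comm, pow_mul]
    exact Nat.pow_lt_pow_left hlt m.succ_ne_zero
  calc ENNReal.ofReal (2⁻¹ / (n + 1))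
      ≤ ENNReal.ofReal (p ^ ((m + 1) * L)) := ENNReal.ofReal_le_ofReal hpL
    _ ≤ μ {ω | 2 ^ ((m + 1) * L) ≤ Y ω} := ofReal_pow_le_measure_two_pow_le hY hp0 hp1 hdist _
    _ ≤ μ {ω | (n + 1) ^ (m + 1) < Y ω} := measure_mono fun ω ↦ hpow.trans_le

end

/-- `X n` is the variable `X_{n+1}` of the informal statement. -/
theorem heavy_tail_gaps_large_infinitely_often_general
    {Ω : Type*} [MeasurableSpace Ω] (μ : Measure Ω)
    (m : ℕ) (p : ℝ) (hp : p = (2 : ℝ) ^ (-(1 : ℝ) / ((m : ℝ) + 1)))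
    (X : ℕ → Ω → ℕ) (hmeas : ∀ i, Measurable (X i))
    (hindep : iIndepFun X μ)
    (hident : ∀ i, IdentDistrib (X i) (X 0) μ μ)
    (hdist : ∀ k : ℕ, μ {ω | X 0 ω = 2 ^ k} = ENNReal.ofReal (p ^ k * (1 - p))) :
    ∀ᵐ ω ∂μ, {n : ℕ | (n + 1) ^ (m + 1) < X n ω}.Infinite := by
  have hp0 : 0 ≤ p := hp ▸ (Real.rpow_pos_of_pos two_pos _).le
  have hpm : p ^ (m + 1) = 1 / 2 := hp ▸ rpow_neg_one_div_pow_eq_half m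
  have hbound (n : ℕ) : ENNReal.ofReal (2⁻¹ / (n + 1)) ≤ μ {ω | (n + 1) ^ (m + 1) < X n ω} :=
    (ofReal_half_div_succ_le_measure (hmeas 0) hp0 hpm hdist n).trans_eq
      ((hident n).measure_mem_eq MeasurableSet.of_discrete).symm
  refine ae_infinite_setOf_mem_of_iIndepSet (fun n ↦ hmeas n MeasurableSet.of_discrete)
    (hindep.iIndepSet_preimage hmeas fun _ ↦ MeasurableSet.of_discrete) ?_
  exact top_unique ((tsum_ofReal_div_natCast_succ_eq_top (by norm_num)).symm.le.trans
    (ENNReal.tsum_le_tsum hbound))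

/-- If the gaps are i.i.d. with `P(X = 2^k) = p^k (1-p)` for `p = 2^{-1/(m+1)}`, then
almost surely the event `X_n > n^{m+1}` occurs for infinitely many `n`.  (The gaps are
indexed from `0`, so `X n` here is the `(n+1)`-st gap.) -/
theorem heavy_tail_gaps_large_infinitely_often
    {Ω : Type*} [MeasurableSpace Ω] (μ : Measure Ω) [IsProbabilityMeasure μ]
    (m : ℕ) (p : ℝ) (hp : p = (2 : ℝ) ^ (-(1 : ℝ) / ((m : ℝ) + 1)))
    (X : ℕ → Ω → ℕ) (hmeas : ∀ i, Measurable (X i))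
    (hindep : iIndepFun X μ)
    (hident : ∀ i, IdentDistrib (X i) (X 0) μ μ)
    (hdist : ∀ k : ℕ, μ {ω | X 0 ω = 2 ^ k} = ENNReal.ofReal (p ^ k * (1 - p))) :
    ∀ᵐ ω ∂μ, {n : ℕ | (n + 1) ^ (m + 1) < X n ω}.Infinite :=
  heavy_tail_gaps_large_infinitely_often_general μ m p hp X hmeas hindep hident hdist
end

section
/- Let X_1, X_2, ... be i.i.d. positive integer-valued random variables with E[X_1^{1/2}] < ∞, let W_n = X_1 + ... + X_n, and let W = {W_n : n ≥ 1}. Then for every constant C > 0, with probability 1, |W ∩ [1, m]| ≥ C·√m for all sufficiently large m. -/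
/-!
Truncate at a level `K`: `x ≤ K + (√x · 1{x > K})²`, and a sum of squares of nonnegative terms
is at most the square of the sum, so `X₀ + ⋯ + X_{n-1} ≤ nK + (∑_{i<n} √Xᵢ · 1{Xᵢ > K})²`.
By the strong law the last sum is asymptotic to `n · E[√X₀ · 1{X₀ > K}]`, which is as small as we
like for large `K` by dominated convergence. Hence the partial sums are `o(n²)` almost surely, and
then the first `⌈C√m⌉` weights, which are distinct, all lie in `[1, m]` once `m` is large.
-/

open MeasureTheory ProbabilityTheory Filter Asymptotics Finset Topology

noncomputable def sqrtTail (t : ℝ) : ℝ → ℝ := (Set.Ioi t).indicator Real.sqrt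

lemma sqrtTail_nonneg (t x : ℝ) : 0 ≤ sqrtTail t x :=
  Set.indicator_nonneg (fun _ _ => Real.sqrt_nonneg _) x

lemma norm_sqrtTail_le (t x : ℝ) : ‖sqrtTail t x‖ ≤ √x := by
  rw [Real.norm_of_nonneg (sqrtTail_nonneg t x)]
  exact Set.indicator_le_self' (fun _ _ => Real.sqrt_nonneg _) x

lemma measurable_sqrtTail (t : ℝ) : Measurable (sqrtTail t) :=
  Real.continuous_sqrt.measurable.indicator measurableSet_Ioi

lemma le_add_sqrtTail_sq {t : ℝ} (ht : 0 ≤ t) (x : ℝ) : x ≤ t + sqrtTail t x ^ 2 := by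
  by_cases hx : t < x
  · rw [sqrtTail, Set.indicator_of_mem (Set.mem_Ioi.2 hx), Real.sq_sqrt (ht.trans hx.le)]
    linarith
  · nlinarith [sqrtTail_nonneg t x]

lemma sum_le_card_mul_add_sq_sum_sqrtTail {ι : Type*} (s : Finset ι) (x : ι → ℝ) {t : ℝ}
    (ht : 0 ≤ t) : ∑ i ∈ s, x i ≤ #s * t + (∑ i ∈ s, sqrtTail t (x i)) ^ 2 :=
  calc ∑ i ∈ s, x i ≤ ∑ i ∈ s, (t + sqrtTail t (x i) ^ 2) :=
        sum_le_sum fun i _ => le_add_sqrtTail_sq ht (x i)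
    _ = #s * t + ∑ i ∈ s, sqrtTail t (x i) ^ 2 := by
        rw [sum_add_distrib, sum_const, nsmul_eq_mul]
    _ ≤ #s * t + (∑ i ∈ s, sqrtTail t (x i)) ^ 2 := by
        gcongr
        exact sum_sq_le_sq_sum_of_nonneg fun i _ => sqrtTail_nonneg t (x i)

lemma tendsto_integral_sqrtTail {Ω : Type*} [MeasurableSpace Ω] {μ : Measure Ω} {Y : Ω → ℝ}
    (hY : AEMeasurable Y μ) (hint : Integrable (fun ω => √(Y ω)) μ) :
    Tendsto (fun K : ℕ => ∫ ω, sqrtTail K (Y ω) ∂μ) atTop (𝓝 0) := by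
  have hzero : ∀ ω, ∀ᶠ K : ℕ in atTop, sqrtTail K (Y ω) = 0 := fun ω => by
    filter_upwards [(tendsto_natCast_atTop_atTop (R := ℝ)).eventually_ge_atTop (Y ω)] with K hK
    exact Set.indicator_of_notMem (not_lt.2 hK) _
  simpa using tendsto_integral_of_dominated_convergence (fun ω => √(Y ω))
    (fun K => ((measurable_sqrtTail K).comp_aemeasurable hY).aestronglyMeasurable) hint
    (fun K => ae_of_all _ fun ω => norm_sqrtTail_le K (Y ω))
    (ae_of_all _ fun ω => tendsto_const_nhds.congr' (EventuallyEq.symm (hzero ω)))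

lemma isLittleO_sum_sq_of_tendsto_sqrtTail (x : ℕ → ℝ) (hx : ∀ i, 0 ≤ x i) (c : ℕ → ℝ)
    (hc : Tendsto c atTop (𝓝 0))
    (h : ∀ K : ℕ, Tendsto (fun n : ℕ => (∑ i ∈ range n, sqrtTail K (x i)) / n) atTop (𝓝 (c K))) :
    (fun n : ℕ => ∑ i ∈ range n, x i) =o[atTop] fun n : ℕ => (n : ℝ) ^ 2 := by
  refine IsLittleO.of_bound fun ε hε => ?_
  set δ := √(ε / 2)
  have hδ : 0 < δ := Real.sqrt_pos.2 (half_pos hε)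
  obtain ⟨K, hK⟩ := (hc.eventually (gt_mem_nhds hδ)).exists
  filter_upwards [(h K).eventually (gt_mem_nhds hK),
    (tendsto_natCast_atTop_atTop.const_mul_atTop (half_pos hε)).eventually_ge_atTop (K : ℝ),
    eventually_gt_atTop 0] with n hmean hKn hn0
  have hn : (0 : ℝ) < n := Nat.cast_pos.2 hn0
  have htail : ∑ i ∈ range n, sqrtTail K (x i) ≤ δ * n := ((div_lt_iff₀ hn).1 hmean).le
  have hδsq : δ ^ 2 = ε / 2 := Real.sq_sqrt (half_pos hε).le
  rw [Real.norm_of_nonneg (sum_nonneg fun i _ => hx i), Real.norm_of_nonneg (by positivity)]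
  calc ∑ i ∈ range n, x i ≤ n * K + (∑ i ∈ range n, sqrtTail K (x i)) ^ 2 := by
        simpa using sum_le_card_mul_add_sq_sum_sqrtTail (range n) x (Nat.cast_nonneg K)
    _ ≤ n * (ε / 2 * n) + (δ * n) ^ 2 := by
        gcongr
        exact sum_nonneg fun i _ => sqrtTail_nonneg _ _
    _ = ε * n ^ 2 := by rw [mul_pow, hδsq]; ring

/-- Marcinkiewicz–Zygmund strong law with exponent `1/2`, for nonnegative variables. -/
theorem ae_isLittleO_sum_sq_of_integrable_sqrt {Ω : Type*} [MeasurableSpace Ω] {μ : Measure Ω}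
    (X : ℕ → Ω → ℝ) (hnonneg : ∀ i ω, 0 ≤ X i ω)
    (hindep : Pairwise fun i j => IndepFun (X i) (X j) μ)
    (hident : ∀ i, IdentDistrib (X i) (X 0) μ μ)
    (hint : Integrable (fun ω => √(X 0 ω)) μ) :
    ∀ᵐ ω ∂μ, (fun n : ℕ => ∑ i ∈ range n, X i ω) =o[atTop] fun n : ℕ => (n : ℝ) ^ 2 := by
  have hslln : ∀ K : ℕ, ∀ᵐ ω ∂μ, Tendsto (fun n : ℕ => (∑ i ∈ range n, sqrtTail K (X i ω)) / n)
      atTop (𝓝 (∫ ω, sqrtTail K (X 0 ω) ∂μ)) := fun K =>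
    strong_law_ae_real (fun i => sqrtTail K ∘ X i)
      (hint.mono ((measurable_sqrtTail K).comp_aemeasurable
          (hident 0).aemeasurable_fst).aestronglyMeasurable
        (ae_of_all _ fun ω => (norm_sqrtTail_le K (X 0 ω)).trans (Real.le_norm_self _)))
      (fun i j hij => (hindep hij).comp (measurable_sqrtTail K) (measurable_sqrtTail K))
      (fun i => (hident i).comp (measurable_sqrtTail K))
  filter_upwards [ae_all_iff.2 hslln] with ω hω
  exact isLittleO_sum_sq_of_tendsto_sqrtTail (fun i => X i ω) (fun i => hnonneg i ω) _
    (tendsto_integral_sqrtTail (hident 0).aemeasurable_fst hint) hω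

lemma strictMono_partialSums {x : ℕ → ℕ} (hx : ∀ i, 0 < x i) :
    StrictMono fun k => ∑ i ∈ range (k + 1), x i :=
  strictMono_nat_of_lt_succ fun k => by
    rw [sum_range_succ _ (k + 1)]
    exact Nat.lt_add_of_pos_right (hx _)

lemma le_ncard_partialSums {x : ℕ → ℕ} (hx : ∀ i, 0 < x i) {n m : ℕ}
    (hsum : ∑ i ∈ range n, x i ≤ m) :
    n ≤ {y : ℕ | 1 ≤ y ∧ y ≤ m ∧ ∃ k, ∑ i ∈ range (k + 1), x i = y}.ncard := by
  set w := fun k => ∑ i ∈ range (k + 1), x i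
  have hw : Set.MapsTo w (Set.Iio n) {y : ℕ | 1 ≤ y ∧ y ≤ m ∧ ∃ k, w k = y} := by
    intro k (hk : k < n)
    refine ⟨?_, ?_, k, rfl⟩
    · exact (hx 0).trans_le (single_le_sum (fun i _ => (hx i).le) (by simp))
    · exact (sum_le_sum_of_subset (range_subset_range.2 hk)).trans hsum
  calc n = (w '' Set.Iio n).ncard := by
        rw [Set.ncard_image_of_injective _ (strictMono_partialSums hx).injective, Set.ncard_Iio_nat]
    _ ≤ _ := Set.ncard_le_ncard hw.image_subset
        ((Set.finite_Icc 1 m).subset fun y hy => ⟨hy.1, hy.2.1⟩)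

lemma eventually_le_ncard_partialSums {x : ℕ → ℕ} (hx : ∀ i, 0 < x i)
    (hsum : (fun n : ℕ => ∑ i ∈ range n, (x i : ℝ)) =o[atTop] fun n : ℕ => (n : ℝ) ^ 2) (C : ℝ) :
    ∀ᶠ m : ℕ in atTop, C * √m ≤
      ({y : ℕ | 1 ≤ y ∧ y ≤ m ∧ ∃ k, ∑ i ∈ range (k + 1), x i = y}.ncard : ℝ) := by
  wlog hC : 0 < C generalizing C with H
  · filter_upwards [H 1 one_pos] with m hm
    nlinarith [Real.sqrt_nonneg m]
  set n := fun m : ℕ => ⌈C * √m⌉₊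
  have hn : Tendsto n atTop atTop := tendsto_nat_ceil_atTop.comp <|
    (Real.tendsto_sqrt_atTop.comp tendsto_natCast_atTop_atTop).const_mul_atTop hC
  have hnm : (fun m => (n m : ℝ) ^ 2) =O[atTop] fun m : ℕ => (m : ℝ) := by
    refine IsBigO.of_bound ((C + 1) ^ 2) ?_
    filter_upwards [eventually_ge_atTop 1] with m hm
    have h1 : 1 ≤ √(m : ℝ) := Real.one_le_sqrt.2 (Nat.one_le_cast.2 hm)
    have h2 : (n m : ℝ) ≤ (C + 1) * √m := by
      nlinarith [Nat.ceil_lt_add_one (by positivity : 0 ≤ C * √(m : ℝ))]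
    rw [Real.norm_of_nonneg (by positivity), Real.norm_of_nonneg (by positivity)]
    calc (n m : ℝ) ^ 2 ≤ ((C + 1) * √m) ^ 2 := by gcongr
      _ = (C + 1) ^ 2 * m := by rw [mul_pow, Real.sq_sqrt (Nat.cast_nonneg _)]
  filter_upwards [((hsum.comp_tendsto hn).trans_isBigO hnm).bound one_pos] with m hm
  have hle : ∑ i ∈ range (n m), x i ≤ m := by
    simp only [Function.comp_apply, ← Nat.cast_sum, Real.norm_natCast, one_mul] at hm
    exact_mod_cast hm
  exact (Nat.le_ceil _).trans (by exact_mod_cast le_ncard_partialSums hx hle)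

theorem random_gap_weight_count_sqrt_lower_bound_general
    {Ω : Type*} [MeasurableSpace Ω] (μ : Measure Ω)
    (X : ℕ → Ω → ℕ)
    (hpos : ∀ i ω, 0 < X i ω)
    (hindep : iIndepFun X μ)
    (hident : ∀ i, IdentDistrib (X i) (X 0) μ μ)
    (hmom : Integrable (fun ω => Real.sqrt (X 0 ω)) μ)
    (W : ℕ → Ω → ℕ) (hW : ∀ n ω, W n ω = ∑ i ∈ Finset.range (n + 1), X i ω)
    (C : ℝ) :
    ∀ᵐ ω ∂μ, ∀ᶠ m : ℕ in atTop,
      C * Real.sqrt m ≤ ({x : ℕ | 1 ≤ x ∧ x ≤ m ∧ ∃ k : ℕ, W k ω = x}.ncard : ℝ) := by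
  have hcast : Measurable (Nat.cast : ℕ → ℝ) := measurable_from_top
  filter_upwards [ae_isLittleO_sum_sq_of_integrable_sqrt (fun i ω => (X i ω : ℝ))
    (fun _ _ => Nat.cast_nonneg _) (fun i j hij => (hindep.indepFun hij).comp hcast hcast)
    (fun i => (hident i).comp hcast) hmom] with ω hω
  simp only [hW]
  exact eventually_le_ncard_partialSums (fun i => hpos i ω) hω C

/-- If the gap distribution has finite 1/2-moment, then for every `C > 0`, almost surely
the number of weights in `[1, m]` is at least `C * √m` for all sufficiently large `m`. -/
theorem random_gap_weight_count_sqrt_lower_bound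
    {Ω : Type*} [MeasurableSpace Ω] (μ : Measure Ω) [IsProbabilityMeasure μ]
    (X : ℕ → Ω → ℕ) (hmeas : ∀ i, Measurable (X i))
    (hpos : ∀ i ω, 0 < X i ω)
    (hindep : iIndepFun X μ)
    (hident : ∀ i, IdentDistrib (X i) (X 0) μ μ)
    (hmom : Integrable (fun ω => Real.sqrt (X 0 ω)) μ)
    (W : ℕ → Ω → ℕ) (hW : ∀ n ω, W n ω = ∑ i ∈ Finset.range (n + 1), X i ω)
    (C : ℝ) (hC : 0 < C) :
    ∀ᵐ ω ∂μ, ∀ᶠ m : ℕ in atTop,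
      C * Real.sqrt m ≤ ({x : ℕ | 1 ≤ x ∧ x ≤ m ∧ ∃ k : ℕ, W k ω = x}.ncard : ℝ) :=
  random_gap_weight_count_sqrt_lower_bound_general μ X hpos hindep hident hmom W hW C
end
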